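/- arXiv:2602.20729 — 4 statements merged into one kernel-verified Lean document; each statement's English description precedes it below -/
import Mathlib

section
/- Nonemptiness of the core of a supermodular capacity: if m is a supermodular capacity on a nonempty finite set Ω, then core(m) is nonempty, i.e., there exists a probability vector P on Ω with P(A) ≥ m(A) for every A ⊆ Ω. -/
open Finset Filter

/-- A capacity on a finite type `Ω`: a normalized monotone set function. -/
def IsCapacity {Ω : Type*} [Fintype Ω] (m : Finset Ω → ℝ) : Prop :=
  m ∅ = 0 ∧ m Finset.univ = 1 ∧ ∀ ⦃A B : Finset Ω⦄, A ⊆ B → m A ≤ m B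

/-- The initial segment `{σ 0, …, σ (k-1)}` of an enumeration `σ` of `Ω`. -/
def prefSet {Ω : Type*} [Fintype Ω] [DecidableEq Ω]
    (σ : Fin (Fintype.card Ω) ≃ Ω) (k : ℕ) : Finset Ω :=
  (Finset.univ.filter fun j : Fin (Fintype.card Ω) => (j : ℕ) < k).image σ

/-- The Choquet sum of `f` against `m` along an enumeration `σ` of `Ω`. -/
def choquetSum {Ω : Type*} [Fintype Ω] [DecidableEq Ω]
    (m : Finset Ω → ℝ) (f : Ω → ℝ) (σ : Fin (Fintype.card Ω) ≃ Ω) : ℝ :=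
  ∑ i : Fin (Fintype.card Ω),
    f (σ i) * (m (prefSet σ ((i : ℕ) + 1)) - m (prefSet σ (i : ℕ)))

/-- An enumeration of `Ω` along which `f` is weakly decreasing. -/
noncomputable def sortedEquiv {Ω : Type*} [Fintype Ω] (f : Ω → ℝ) :
    Fin (Fintype.card Ω) ≃ Ω :=
  (Tuple.sort fun i => -f ((Fintype.equivFin Ω).symm i)).trans
    (Fintype.equivFin Ω).symm

/-- The discrete Choquet integral of `f` with respect to `m`. -/
noncomputable def choquet {Ω : Type*} [Fintype Ω] [DecidableEq Ω]
    (m : Finset Ω → ℝ) (f : Ω → ℝ) : ℝ :=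
  choquetSum m f (sortedEquiv f)

/-- The dual capacity `m'(A) = 1 - m(Ω \ A)`. -/
def dualCap {Ω : Type*} [Fintype Ω] [DecidableEq Ω]
    (m : Finset Ω → ℝ) (A : Finset Ω) : ℝ :=
  1 - m Aᶜ

/-- Supermodularity: `m(A ∪ B) + m(A ∩ B) ≥ m(A) + m(B)`. -/
def IsSupermodular {Ω : Type*} [DecidableEq Ω] (m : Finset Ω → ℝ) : Prop :=
  ∀ A B : Finset Ω, m A + m B ≤ m (A ∪ B) + m (A ∩ B)

/-- Submodularity: `m(A ∪ B) + m(A ∩ B) ≤ m(A) + m(B)`. -/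
def IsSubmodular {Ω : Type*} [DecidableEq Ω] (m : Finset Ω → ℝ) : Prop :=
  ∀ A B : Finset Ω, m (A ∪ B) + m (A ∩ B) ≤ m A + m B

/-- A probability vector on a finite type `Ω`. -/
def IsProbVector {Ω : Type*} [Fintype Ω] (P : Ω → ℝ) : Prop :=
  (∀ ω, 0 ≤ P ω) ∧ ∑ ω, P ω = 1

/-- Membership in the core of a capacity `m`. -/
def memCore {Ω : Type*} [Fintype Ω] (m : Finset Ω → ℝ) (P : Ω → ℝ) : Prop :=
  IsProbVector P ∧ ∀ A : Finset Ω, m A ≤ ∑ ω ∈ A, P ω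

/-- The λ-rule set function `m_λ(A) = (∏_{ω ∈ A} (1 + λ g(ω)) - 1) / λ`. -/
noncomputable def mLam {Ω : Type*} (lam : ℝ) (g : Ω → ℝ) (A : Finset Ω) : ℝ :=
  ((∏ ω ∈ A, (1 + lam * g ω)) - 1) / lam

/-!
Order `Ω` linearly and let `P a = m {x ≤ a} - m {x < a}` be the marginal contributions of the
points along that order. They are nonnegative by monotonicity and telescope to `m Ω = 1`. If `a` is
the largest point of `A`, supermodularity applied to `A` and `{x < a}` gives
`m A - m (A \ {a}) ≤ P a`, so `m A ≤ P(A)` by induction on `A`.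
-/

section MarginalVector

variable {α : Type*} [Fintype α] [LinearOrder α]

def marginalVector (m : Finset α → ℝ) (a : α) : ℝ :=
  m {x | x ≤ a} - m {x | x < a}

lemma marginalVector_nonneg {m : Finset α → ℝ} (hmono : Monotone m) (a : α) :
    0 ≤ marginalVector m a :=
  sub_nonneg.2 <| hmono <| monotone_filter_right _ fun _ _ => le_of_lt

variable [DecidableEq α]

lemma insert_union_filter_lt {s : Finset α} {a : α} (hs : ∀ x ∈ s, x < a) :
    insert a s ∪ ({x | x < a} : Finset α) = ({x | x ≤ a} : Finset α) := by
  ext x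
  simp only [mem_union, mem_insert, mem_filter, mem_univ, true_and]
  grind

lemma insert_inter_filter_lt {s : Finset α} {a : α} (hs : ∀ x ∈ s, x < a) :
    insert a s ∩ ({x | x < a} : Finset α) = s := by
  ext x
  simp only [mem_inter, mem_insert, mem_filter, mem_univ, true_and]
  grind

lemma sub_le_sum_marginalVector {m : Finset α → ℝ} (hsm : IsSupermodular m) (A : Finset α) :
    m A - m ∅ ≤ ∑ x ∈ A, marginalVector m x := by
  induction A using Finset.induction_on_max with
  | empty => simp
  | insert a s hs ih =>
    have hsup := hsm (insert a s) {x | x < a}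
    rw [insert_union_filter_lt hs, insert_inter_filter_lt hs] at hsup
    have has : a ∉ s := fun ha => lt_irrefl a (hs a ha)
    rw [sum_insert has, marginalVector]
    linarith

lemma sum_marginalVector_of_isLowerSet (m : Finset α → ℝ) {s : Finset α}
    (hs : IsLowerSet (s : Set α)) : ∑ x ∈ s, marginalVector m x = m s - m ∅ := by
  induction s using Finset.induction_on_max with
  | empty => simp
  | insert a s hlt ih =>
    have has : a ∉ s := fun ha => lt_irrefl a (hlt a ha)
    have hs_eq : s = ({x | x < a} : Finset α) := by
      ext x
      refine ⟨fun hx => by simpa using hlt x hx, fun hx => ?_⟩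
      have hx : x < a := by simpa using hx
      simpa [hx.ne] using hs hx.le (mem_insert_self a s)
    have hs_lower : IsLowerSet (s : Set α) := by
      rw [hs_eq, coe_filter]
      exact fun x y hyx hx => ⟨mem_univ y, hyx.trans_lt hx.2⟩
    have hs_insert : ({x | x ≤ a} : Finset α) = insert a s := by
      rw [← insert_union_filter_lt hlt, ← hs_eq, union_eq_left.2 (subset_insert a s)]
    rw [sum_insert has, ih hs_lower, marginalVector, hs_insert, ← hs_eq]
    ring

lemma memCore_marginalVector {m : Finset α → ℝ} (hm : IsCapacity m) (hsm : IsSupermodular m) :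
    memCore m (marginalVector m) := by
  obtain ⟨h0, h1, hmono⟩ := hm
  refine ⟨⟨marginalVector_nonneg hmono, ?_⟩, fun A => ?_⟩
  · simpa [h0, h1] using
      sum_marginalVector_of_isLowerSet m (s := univ) (by simpa using isLowerSet_univ)
  · simpa [h0] using sub_le_sum_marginalVector hsm A

end MarginalVector

theorem core_nonempty_of_supermodular_general {Ω : Type*} [Fintype Ω] [DecidableEq Ω]
    (m : Finset Ω → ℝ) (hm : IsCapacity m) (hsm : IsSupermodular m) :
    ∃ P : Ω → ℝ, memCore m P := by
  let : LinearOrder Ω := LinearOrder.lift' _ (Fintype.equivFin Ω).injective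
  exact ⟨marginalVector m, memCore_marginalVector hm hsm⟩

/-- the core of a supermodular capacity is nonempty. -/
theorem core_nonempty_of_supermodular {Ω : Type*} [Fintype Ω] [DecidableEq Ω] [Nonempty Ω]
    (m : Finset Ω → ℝ) (hm : IsCapacity m) (hsm : IsSupermodular m) :
    ∃ P : Ω → ℝ, memCore m P :=
  core_nonempty_of_supermodular_general m hm hsm
end

section
/- Existence, uniqueness and sign of the Sugeno parameter: let Ω be a finite set with |Ω| ≥ 2 and g : Ω → ℝ with 0 < g(ω) < 1 for all ω and Σ_{ω∈Ω} g(ω) ≠ 1. Then there exists a unique λ ∈ (−1, ∞) with λ ≠ 0 satisfying ∏_{ω∈Ω}(1 + λ g(ω)) = 1 + λ; moreover λ > 0 if Σ_{ω∈Ω} g(ω) < 1, and −1 < λ < 0 if Σ_{ω∈Ω} g(ω) > 1. -/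
open Finset Filter

/-!
The residual `F λ = ∏ ω, (1 + λ g ω) - (1 + λ)` of the characteristic equation is strictly
convex on `[-1, ∞)`: its derivative `∑ ω, g ω ∏ ω' ≠ ω, (1 + λ g ω') - 1` is strictly increasing
because every product has at least one factor. Since `F 0 = 0`, a strictly convex `F` has at most
one other zero. Its slope at `0` is `∑ g - 1`. If `∑ g < 1`, `F` dips below `0` just right of `0`
and is positive far to the right; if `∑ g > 1`, it dips below `0` just left of `0`, while
`F (-1) = ∏ (1 - g ω) > 0`. The intermediate value theorem then provides the zero, with the
stated sign.
-/

open Topology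

lemma StrictConvexOn.eq_of_apply_eq_of_ne {s : Set ℝ} {f : ℝ → ℝ} (hf : StrictConvexOn ℝ s f)
    {a x y : ℝ} (ha : a ∈ s) (hx : x ∈ s) (hy : y ∈ s) (hxa : x ≠ a) (hya : y ≠ a)
    (hfx : f x = f a) (hfy : f y = f a) : x = y := by
  by_contra hxy
  rcases lt_or_gt_of_ne hxy with hlt | hlt
  · simpa [hfx, hfy] using hf.secant_strict_mono ha hx hy hxa hya hlt
  · simpa [hfx, hfy] using hf.secant_strict_mono ha hy hx hya hxa hlt

lemma HasDerivAt.eventually_nhdsGT_lt {f : ℝ → ℝ} {f' a : ℝ} (hf : HasDerivAt f f' a)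
    (hf' : f' < 0) : ∀ᶠ x in 𝓝[>] a, f x < f a := by
  have hslope := (hasDerivAt_iff_tendsto_slope.mp hf).mono_left (nhdsGT_le_nhdsNE a)
  filter_upwards [hslope.eventually_lt_const hf', self_mem_nhdsWithin] with x hx (hax : a < x)
  rw [slope_def_field, div_neg_iff] at hx
  rcases hx with hx | hx <;> linarith [hx.1, hx.2]

lemma HasDerivAt.eventually_nhdsLT_lt {f : ℝ → ℝ} {f' a : ℝ} (hf : HasDerivAt f f' a)
    (hf' : 0 < f') : ∀ᶠ x in 𝓝[<] a, f x < f a := by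
  have hslope := (hasDerivAt_iff_tendsto_slope.mp hf).mono_left (nhdsLT_le_nhdsNE a)
  filter_upwards [hslope.eventually_const_lt hf', self_mem_nhdsWithin] with x hx (hxa : x < a)
  rw [slope_def_field, div_pos_iff] at hx
  rcases hx with hx | hx <;> linarith [hx.1, hx.2]

lemma one_add_mul_pos_of_neg_one_le {a x : ℝ} (ha₀ : 0 ≤ a) (ha₁ : a < 1) (hx : -1 ≤ x) :
    0 < 1 + x * a := by
  nlinarith

namespace Sugeno

variable {Ω : Type*} [Fintype Ω] (g : Ω → ℝ)

def IsParameter (lam : ℝ) : Prop :=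
  -1 < lam ∧ lam ≠ 0 ∧ ∏ ω, (1 + lam * g ω) = 1 + lam

def residual (lam : ℝ) : ℝ :=
  ∏ ω, (1 + lam * g ω) - (1 + lam)

lemma isParameter_iff {lam : ℝ} :
    IsParameter g lam ↔ -1 < lam ∧ lam ≠ 0 ∧ residual g lam = 0 := by
  rw [IsParameter, residual, sub_eq_zero]

lemma residual_zero : residual g 0 = 0 := by
  simp [residual]

variable {g}

lemma residual_neg_one_pos (hg : ∀ ω, g ω < 1) : 0 < residual g (-1) := by
  simpa [residual, ← sub_eq_add_neg] using prod_pos fun ω _ => sub_pos.2 (hg ω)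

lemma continuous_residual : Continuous (residual g) :=
  (continuous_finsetProd _ fun ω _ => by fun_prop).sub (by fun_prop)

lemma hasDerivAt_residual [DecidableEq Ω] (x : ℝ) :
    HasDerivAt (residual g) (∑ ω, (∏ ω' ∈ univ.erase ω, (1 + x * g ω')) * g ω - 1) x := by
  have hprod := HasDerivAt.fun_finsetProd (u := univ) (x := x) (f := fun ω lam => 1 + lam * g ω)
    (fun ω _ => (hasDerivAt_mul_const (g ω)).const_add 1)
  simp only [smul_eq_mul] at hprod
  exact hprod.fun_sub ((hasDerivAt_id' x).const_add 1)

lemma hasDerivAt_residual_zero : HasDerivAt (residual g) (∑ ω, g ω - 1) 0 := by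
  classical
  simpa using hasDerivAt_residual (g := g) 0

lemma strictMonoOn_deriv_residual (hcard : 2 ≤ Fintype.card Ω)
    (hg : ∀ ω, 0 < g ω ∧ g ω < 1) : StrictMonoOn (deriv (residual g)) (Set.Ici (-1)) := by
  classical
  intro x hx y _ hxy
  simp only [(hasDerivAt_residual _).deriv, sub_lt_sub_iff_right]
  have huniv : (univ : Finset Ω).Nonempty := card_pos.1 (by rw [card_univ]; omega)
  refine sum_lt_sum_of_nonempty huniv fun ω _ => mul_lt_mul_of_pos_right ?_ (hg ω).1
  have herase : (univ.erase ω).Nonempty := by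
    rw [← card_pos, card_erase_of_mem (mem_univ ω), card_univ]; omega
  refine prod_lt_prod_of_nonempty (fun ω' _ => ?_) (fun ω' _ => ?_) herase
  · exact one_add_mul_pos_of_neg_one_le (hg ω').1.le (hg ω').2 hx
  · have := (hg ω').1
    gcongr

lemma strictConvexOn_residual (hcard : 2 ≤ Fintype.card Ω) (hg : ∀ ω, 0 < g ω ∧ g ω < 1) :
    StrictConvexOn ℝ (Set.Ici (-1)) (residual g) :=
  (strictMonoOn_deriv_residual hcard hg).mono interior_subset |>.strictConvexOn_of_deriv
    (convex_Ici _) continuous_residual.continuousOn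

lemma exists_one_lt_residual_pos (hcard : 2 ≤ Fintype.card Ω) (hg : ∀ ω, 0 < g ω) :
    ∃ L, 1 < L ∧ 0 < residual g L := by
  classical
  obtain ⟨i, j, hij⟩ := Fintype.exists_pair_of_one_lt_card (α := Ω) (by omega)
  have hgij := mul_pos (hg i) (hg j)
  -- `residual g L ≥ L * (L * g i * g j - 1 + g i + g j)`, and `L * g i * g j > 1`
  set L := 1 / (g i * g j) + 1 with hL
  have hL1 : 1 < L := by rw [hL]; linarith [one_div_pos.2 hgij]
  have hpair : (1 + L * g i) * (1 + L * g j) ≤ ∏ ω, (1 + L * g ω) := by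
    rw [← prod_pair (f := fun ω => 1 + L * g ω) hij]
    refine prod_le_prod_of_subset_of_one_le (subset_univ _) (fun ω _ => ?_) (fun ω _ _ => ?_)
    all_goals nlinarith [hg ω]
  have hLij : L * (g i * g j) = 1 + g i * g j := by
    rw [hL, add_mul, one_div_mul_cancel hgij.ne', one_mul]
  refine ⟨L, hL1, ?_⟩
  rw [residual]
  nlinarith [hg i, hg j]

lemma exists_isParameter_pos (hcard : 2 ≤ Fintype.card Ω) (hg : ∀ ω, 0 < g ω ∧ g ω < 1)
    (hsum : ∑ ω, g ω < 1) : ∃ lam, IsParameter g lam ∧ 0 < lam := by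
  obtain ⟨x, hFx, hx⟩ := ((hasDerivAt_residual_zero.eventually_nhdsGT_lt (by linarith)).and
    (Ioo_mem_nhdsGT one_pos)).exists
  obtain ⟨L, hL1, hFL⟩ := exists_one_lt_residual_pos hcard fun ω => (hg ω).1
  rw [residual_zero] at hFx
  obtain ⟨c, hc, hFc⟩ := intermediate_value_Ioo (hx.2.trans hL1).le
    continuous_residual.continuousOn ⟨hFx, hFL⟩
  have hc0 : 0 < c := hx.1.trans hc.1
  exact ⟨c, (isParameter_iff g).2 ⟨by linarith, hc0.ne', hFc⟩, hc0⟩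

lemma exists_isParameter_neg (hg : ∀ ω, g ω < 1) (hsum : 1 < ∑ ω, g ω) :
    ∃ lam, IsParameter g lam ∧ lam < 0 := by
  obtain ⟨x, hFx, hx⟩ := ((hasDerivAt_residual_zero.eventually_nhdsLT_lt (by linarith)).and
    (Ioo_mem_nhdsLT neg_one_lt_zero)).exists
  rw [residual_zero] at hFx
  obtain ⟨c, hc, hFc⟩ := intermediate_value_Ioo' hx.1.le
    continuous_residual.continuousOn ⟨hFx, residual_neg_one_pos hg⟩
  have hc0 : c < 0 := hc.2.trans hx.2
  exact ⟨c, (isParameter_iff g).2 ⟨hc.1, hc0.ne, hFc⟩, hc0⟩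

lemma IsParameter.eq (hcard : 2 ≤ Fintype.card Ω) (hg : ∀ ω, 0 < g ω ∧ g ω < 1)
    {lam mu : ℝ} (hlam : IsParameter g lam) (hmu : IsParameter g mu) : lam = mu := by
  rw [isParameter_iff] at hlam hmu
  refine (strictConvexOn_residual hcard hg).eq_of_apply_eq_of_ne (a := 0) (by simp)
    hlam.1.le hmu.1.le hlam.2.1 hmu.2.1 ?_ ?_
  · rw [hlam.2.2, residual_zero]
  · rw [hmu.2.2, residual_zero]

end Sugeno

/-- existence, uniqueness and sign of the Sugeno parameter `λ`. -/
theorem sugeno_parameter_exists_unique {Ω : Type*} [Fintype Ω]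
    (hcard : 2 ≤ Fintype.card Ω)
    (g : Ω → ℝ) (hg : ∀ ω, 0 < g ω ∧ g ω < 1) (hsum : ∑ ω, g ω ≠ 1) :
    (∃! lam : ℝ, -1 < lam ∧ lam ≠ 0 ∧ ∏ ω, (1 + lam * g ω) = 1 + lam) ∧
    (∀ lam : ℝ, (-1 < lam ∧ lam ≠ 0 ∧ ∏ ω, (1 + lam * g ω) = 1 + lam) →
      ((∑ ω, g ω < 1 → 0 < lam) ∧ (1 < ∑ ω, g ω → lam < 0))) := by
  obtain ⟨c, hc, hsign⟩ : ∃ c, Sugeno.IsParameter g c ∧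
      (∑ ω, g ω < 1 → 0 < c) ∧ (1 < ∑ ω, g ω → c < 0) := by
    rcases hsum.lt_or_gt with hlt | hgt
    · obtain ⟨c, hc, hpos⟩ := Sugeno.exists_isParameter_pos hcard hg hlt
      exact ⟨c, hc, fun _ => hpos, fun hgt => absurd hlt hgt.not_gt⟩
    · obtain ⟨c, hc, hneg⟩ := Sugeno.exists_isParameter_neg (fun ω => (hg ω).2) hgt
      exact ⟨c, hc, fun hlt => absurd hlt hgt.not_gt, fun _ => hneg⟩
  have huniq : ∀ lam, Sugeno.IsParameter g lam → lam = c := fun lam hlam => hlam.eq hcard hg hc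
  exact ⟨⟨c, hc, huniq⟩, fun lam hlam => huniq lam hlam ▸ hsign⟩
end

section
/- Supermodularity of λ-fuzzy measures with nonnegative interaction: let Ω be a finite set, λ > 0, and g : Ω → ℝ with 0 < g(ω) < 1 for all ω, satisfying ∏_{ω∈Ω}(1 + λ g(ω)) = 1 + λ, and define m_λ(A) = (∏_{ω∈A}(1 + λ g(ω)) − 1)/λ. Then m_λ is supermodular: m_λ(A ∪ B) + m_λ(A ∩ B) ≥ m_λ(A) + m_λ(B) for all A, B ⊆ Ω. -/
open Finset Filter

/-!
Writing `P(S) = ∏_{ω ∈ S} (1 + λ g(ω))` and splitting `A ∪ B` into `A ∩ B`, `A \ B`, `B \ A`,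
`P(A ∪ B) + P(A ∩ B) - P(A) - P(B) = P(A ∩ B) (P(A \ B) - 1) (P(B \ A) - 1)`,
which is nonnegative because every factor `1 + λ g(ω)` is at least `1` when `λ > 0`.
Supermodularity then passes to `m_λ = (P - 1) / λ`.
-/

namespace Finset

variable {ι R : Type*} [DecidableEq ι] [CommRing R]

theorem prod_union_add_prod_inter_sub (A B : Finset ι) (f : ι → R) :
    (∏ i ∈ A ∪ B, f i) + (∏ i ∈ A ∩ B, f i) - (∏ i ∈ A, f i) - (∏ i ∈ B, f i) =
      (∏ i ∈ A ∩ B, f i) * ((∏ i ∈ A \ B, f i) - 1) * ((∏ i ∈ B \ A, f i) - 1) := by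
  rw [← union_sdiff_self_eq_union, prod_union disjoint_sdiff,
    ← prod_inter_mul_prod_sdiff A B, ← prod_inter_mul_prod_sdiff B A, inter_comm B A]
  ring

theorem prod_add_prod_le_prod_union_add_prod_inter [PartialOrder R] [IsOrderedRing R]
    {f : ι → R} (hf : ∀ i, 1 ≤ f i) (A B : Finset ι) :
    (∏ i ∈ A, f i) + (∏ i ∈ B, f i) ≤ (∏ i ∈ A ∪ B, f i) + (∏ i ∈ A ∩ B, f i) := by
  have hprod (S : Finset ι) : 1 ≤ ∏ i ∈ S, f i := one_le_prod fun i _ => hf i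
  have hdefect := mul_nonneg (mul_nonneg (zero_le_one.trans (hprod (A ∩ B)))
    (sub_nonneg.2 (hprod (A \ B)))) (sub_nonneg.2 (hprod (B \ A)))
  rw [← prod_union_add_prod_inter_sub] at hdefect
  linear_combination hdefect

end Finset

theorem IsSupermodular.sub_const_div {Ω : Type*} [DecidableEq Ω] {m : Finset Ω → ℝ}
    (hm : IsSupermodular m) (d : ℝ) {c : ℝ} (hc : 0 ≤ c) :
    IsSupermodular fun A => (m A - d) / c := by
  intro A B
  simp only [div_eq_mul_inv]
  linear_combination c⁻¹ * hm A B

theorem mLam_supermodular_general {Ω : Type*} [DecidableEq Ω]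
    (lam : ℝ) (hlam : 0 < lam)
    (g : Ω → ℝ) (hg : ∀ ω, 0 < g ω ∧ g ω < 1) :
    ∀ A B : Finset Ω,
      mLam lam g A + mLam lam g B ≤ mLam lam g (A ∪ B) + mLam lam g (A ∩ B) := by
  have hfactor (ω : Ω) : 1 ≤ 1 + lam * g ω :=
    le_add_of_nonneg_right (mul_pos hlam (hg ω).1).le
  exact IsSupermodular.sub_const_div (prod_add_prod_le_prod_union_add_prod_inter hfactor) 1
    hlam.le

/-- λ-fuzzy measures with positive interaction parameter are supermodular. -/
theorem mLam_supermodular {Ω : Type*} [Fintype Ω] [DecidableEq Ω]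
    (lam : ℝ) (hlam : 0 < lam)
    (g : Ω → ℝ) (hg : ∀ ω, 0 < g ω ∧ g ω < 1)
    (hchar : ∏ ω, (1 + lam * g ω) = 1 + lam) :
    ∀ A B : Finset Ω,
      mLam lam g A + mLam lam g B ≤ mLam lam g (A ∪ B) + mLam lam g (A ∩ B) :=
  mLam_supermodular_general lam hlam g hg
end

section
/- γ-contraction of the fuzzy Bellman operator: let S and A be nonempty finite sets, γ ∈ [0,1), r : S × A → ℝ, π(·|s) a probability vector on A for each s ∈ S, and for each (s,a) ∈ S × A let 𝒫(s,a) be a nonempty finite set of probability vectors on S equipped with a capacity m_{s,a}. Define the fuzzy Bellman operator F on functions V : S → ℝ by F(V)(s) = Σ_{a∈A} π(a|s)·[ r(s,a) + γ·(C)∫_{𝒫(s,a)} (p ↦ Σ_{s'∈S} p(s') V(s')) dm_{s,a} ]. Then for all V₁, V₂ : S → ℝ, max_{s∈S} |F(V₁)(s) − F(V₂)(s)| ≤ γ · max_{s∈S} |V₁(s) − V₂(s)|. -/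
open Finset Filter

/-!
Along an enumeration `σ` on which `f` decreases, every superlevel set `{f ≥ t}` is a prefix of `σ`,
so its capacity is the sum of the increments of `m` at the positions `i` with `t ≤ f (σ i)`.
Integrating in `t` turns the Choquet sum into the layer-cake formula `a + ∫ t in a..b, m {f ≥ t}`
for any bounds `a ≤ f ≤ b`. By this formula the Choquet integral is monotone in `f` and commutes
with adding constants, hence is 1-Lipschitz for the sup norm. Averaging against a probability
vector is 1-Lipschitz as well, so `F` is `γ`-Lipschitz.
-/

theorem Antitone.le_iff_lt_card_filter {α : Type*} [LinearOrder α] {n : ℕ} {v : Fin n → α}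
    (hv : Antitone v) (t : α) (i : Fin n) : t ≤ v i ↔ (i : ℕ) < #{j | t ≤ v j} := by
  constructor
  · intro hi
    have hsub : Iic i ⊆ ({j | t ≤ v j} : Finset (Fin n)) := fun j hj =>
      mem_filter.2 ⟨mem_univ j, hi.trans (hv (mem_Iic.1 hj))⟩
    have := card_le_card hsub
    rw [Fin.card_Iic] at this
    omega
  · intro hi
    by_contra hti
    have hsub : ({j | t ≤ v j} : Finset (Fin n)) ⊆ Iio i := fun j hj =>
      mem_Iio.2 (lt_of_not_ge fun hij => hti ((mem_filter.1 hj).2.trans (hv hij)))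
    have := card_le_card hsub
    rw [Fin.card_Iio] at this
    omega

section

variable {Ω : Type*} [Fintype Ω]

theorem IsProbVector.abs_sum_mul_le {P x : Ω → ℝ} (hP : IsProbVector P) {c : ℝ}
    (hx : ∀ ω, |x ω| ≤ c) : |∑ ω, P ω * x ω| ≤ c :=
  calc |∑ ω, P ω * x ω|
      ≤ ∑ ω, P ω * c := (abs_sum_le_sum_abs _ _).trans <| sum_le_sum fun ω _ => by
        rw [abs_mul, abs_of_nonneg (hP.1 ω)]
        exact mul_le_mul_of_nonneg_left (hx ω) (hP.1 ω)
    _ = c := by rw [← sum_mul, hP.2, one_mul]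

theorem sortedEquiv_antitone (f : Ω → ℝ) : Antitone (f ∘ sortedEquiv f) := fun _ _ hij => by
  simpa [sortedEquiv] using Tuple.monotone_sort (fun i => -f ((Fintype.equivFin Ω).symm i)) hij

theorem filter_le_subset_filter_le {f g : Ω → ℝ} {s t : ℝ} (hst : s ≤ t)
    (hfg : ∀ ω, f ω ≤ g ω) : ({ω | t ≤ f ω} : Finset Ω) ⊆ ({ω | s ≤ g ω} : Finset Ω) :=
  fun ω hω => mem_filter.2 ⟨mem_univ ω, hst.trans ((mem_filter.1 hω).2.trans (hfg ω))⟩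

section IsCapacity

variable {m : Finset Ω → ℝ}

theorem IsCapacity.map_empty (hm : IsCapacity m) : m ∅ = 0 := hm.1

theorem IsCapacity.map_univ (hm : IsCapacity m) : m univ = 1 := hm.2.1

theorem IsCapacity.mono (hm : IsCapacity m) {A B : Finset Ω} (h : A ⊆ B) : m A ≤ m B := hm.2.2 h

theorem IsCapacity.antitone_superlevel (hm : IsCapacity m) (f : Ω → ℝ) :
    Antitone fun t => m {ω | t ≤ f ω} :=
  fun _ _ hst => hm.mono (filter_le_subset_filter_le hst fun _ => le_rfl)

end IsCapacity

variable [DecidableEq Ω] {m : Finset Ω → ℝ} {f : Ω → ℝ} {σ : Fin (Fintype.card Ω) ≃ Ω}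

theorem mem_prefSet {k : ℕ} {ω : Ω} : ω ∈ prefSet σ k ↔ (σ.symm ω : ℕ) < k := by
  simp only [prefSet, mem_image, mem_filter, mem_univ, true_and]
  exact ⟨by rintro ⟨j, hj, rfl⟩; simpa using hj, fun h => ⟨σ.symm ω, h, σ.apply_symm_apply ω⟩⟩

theorem prefSet_zero (σ : Fin (Fintype.card Ω) ≃ Ω) : prefSet σ 0 = ∅ := by
  ext; simp [mem_prefSet]

theorem prefSet_card (σ : Fin (Fintype.card Ω) ≃ Ω) : prefSet σ (Fintype.card Ω) = univ := by
  ext; simp [mem_prefSet]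

theorem IsCapacity.sum_prefSet_increments (hm : IsCapacity m) (σ : Fin (Fintype.card Ω) ≃ Ω) :
    ∑ i : Fin (Fintype.card Ω), (m (prefSet σ (i + 1)) - m (prefSet σ i)) = 1 := by
  rw [Fin.sum_univ_eq_sum_range (fun i => m (prefSet σ (i + 1)) - m (prefSet σ i)),
    sum_range_sub (fun i => m (prefSet σ i)), prefSet_card, prefSet_zero, hm.map_empty, hm.map_univ,
    sub_zero]

theorem filter_le_eq_prefSet (hσ : Antitone (f ∘ σ)) (t : ℝ) :
    ({ω | t ≤ f ω} : Finset Ω) = prefSet σ #{j | t ≤ f (σ j)} := by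
  ext ω
  have hω := hσ.le_iff_lt_card_filter t (σ.symm ω)
  simp only [Function.comp_apply, Equiv.apply_symm_apply] at hω
  simp [mem_prefSet, ← hω]

theorem capacity_filter_le_eq_sum (hm0 : m ∅ = 0) (hσ : Antitone (f ∘ σ)) (t : ℝ) :
    m {ω | t ≤ f ω} = ∑ i : Fin (Fintype.card Ω),
      {x : ℝ | x ≤ f (σ i)}.indicator (fun _ => m (prefSet σ (i + 1)) - m (prefSet σ i)) t := by
  set k := #{j | t ≤ f (σ j)}
  have hk : k ≤ Fintype.card Ω := by simpa using card_le_univ ({j | t ≤ f (σ j)} : Finset _)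
  have hprefix : ∀ i : Fin (Fintype.card Ω), t ≤ f (σ i) ↔ (i : ℕ) < k :=
    hσ.le_iff_lt_card_filter t
  simp only [Set.indicator_apply, Set.mem_ofPred_eq, hprefix]
  rw [filter_le_eq_prefSet hσ, Fin.sum_univ_eq_sum_range
    (fun i => if i < k then m (prefSet σ (i + 1)) - m (prefSet σ i) else 0), ← sum_filter,
    show (range (Fintype.card Ω)).filter (· < k) = range k by ext; simp; omega,
    sum_range_sub (fun i => m (prefSet σ i)), prefSet_zero, hm0, sub_zero]

theorem choquetSum_eq_integral (hm : IsCapacity m) (hσ : Antitone (f ∘ σ)) {a b : ℝ}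
    (ha : ∀ ω, a ≤ f ω) (hb : ∀ ω, f ω ≤ b) :
    choquetSum m f σ = a + ∫ t in a..b, m {ω | t ≤ f ω} := by
  simp_rw [capacity_filter_le_eq_sum hm.map_empty hσ]
  rw [intervalIntegral.integral_finsetSum fun i _ => ?_]
  · simp_rw [intervalIntegral.integral_indicator ⟨ha _, hb _⟩, intervalIntegral.integral_const,
      smul_eq_mul, sub_mul, sum_sub_distrib, ← mul_sum, hm.sum_prefSet_increments, mul_one]
    rw [choquetSum]
    ring
  · exact intervalIntegrable_iff.2
      ((intervalIntegrable_iff.1 intervalIntegrable_const).indicator measurableSet_Iic)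

theorem choquet_eq_integral (hm : IsCapacity m) {a b : ℝ} (ha : ∀ ω, a ≤ f ω)
    (hb : ∀ ω, f ω ≤ b) : choquet m f = a + ∫ t in a..b, m {ω | t ≤ f ω} :=
  choquetSum_eq_integral hm (sortedEquiv_antitone f) ha hb

theorem choquet_mono (hm : IsCapacity m) {f g : Ω → ℝ} (hfg : ∀ ω, f ω ≤ g ω) :
    choquet m f ≤ choquet m g := by
  obtain ⟨a, ha⟩ := (Set.finite_range f).bddBelow
  obtain ⟨b, hb⟩ := (Set.finite_range g).bddAbove
  have hfa : ∀ ω, a ≤ f ω := fun ω => ha ⟨ω, rfl⟩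
  -- `max a b` keeps the interval oriented even when `Ω` is empty
  have hgb : ∀ ω, g ω ≤ max a b := fun ω => (hb ⟨ω, rfl⟩).trans (le_max_right a b)
  rw [choquet_eq_integral hm hfa fun ω => (hfg ω).trans (hgb ω),
    choquet_eq_integral hm (fun ω => (hfa ω).trans (hfg ω)) hgb]
  gcongr
  exact intervalIntegral.integral_mono_on (le_max_left a b)
    (hm.antitone_superlevel f).intervalIntegrable (hm.antitone_superlevel g).intervalIntegrable
    fun t _ => hm.mono (filter_le_subset_filter_le le_rfl hfg)

theorem choquet_add_const (hm : IsCapacity m) (f : Ω → ℝ) (c : ℝ) :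
    choquet m (fun ω => f ω + c) = choquet m f + c := by
  obtain ⟨a, ha⟩ := (Set.finite_range f).bddBelow
  obtain ⟨b, hb⟩ := (Set.finite_range f).bddAbove
  have hfa : ∀ ω, a ≤ f ω := fun ω => ha ⟨ω, rfl⟩
  have hfb : ∀ ω, f ω ≤ b := fun ω => hb ⟨ω, rfl⟩
  rw [choquet_eq_integral hm hfa hfb, choquet_eq_integral hm (a := a + c) (b := b + c)
    (fun ω => (add_le_add_iff_right c).2 (hfa ω)) (fun ω => (add_le_add_iff_right c).2 (hfb ω)),
    ← intervalIntegral.integral_comp_add_right]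
  simp only [add_le_add_iff_right]
  ring

theorem abs_choquet_sub_le (hm : IsCapacity m) {f g : Ω → ℝ} {c : ℝ}
    (h : ∀ ω, |f ω - g ω| ≤ c) : |choquet m f - choquet m g| ≤ c := by
  have hfg := choquet_mono hm fun ω => (by linarith [abs_le.1 (h ω)] : f ω ≤ g ω + c)
  have hgf := choquet_mono hm fun ω => (by linarith [abs_le.1 (h ω)] : g ω ≤ f ω + c)
  rw [choquet_add_const hm] at hfg hgf
  exact abs_sub_le_iff.2 ⟨by linarith, by linarith⟩

end

theorem fuzzy_bellman_contraction_general
    {S A : Type*} [Fintype S] [Nonempty S] [Fintype A]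
    (γ : ℝ) (hγ0 : 0 ≤ γ)
    (r : S → A → ℝ)
    (pol : S → A → ℝ) (hpol : ∀ s, IsProbVector (pol s))
    (P : S → A → Type*) [∀ s a, Fintype (P s a)] [∀ s a, DecidableEq (P s a)]
    (p : ∀ s a, P s a → S → ℝ) (hp : ∀ s a k, IsProbVector (p s a k))
    (m : ∀ s a, Finset (P s a) → ℝ) (hm : ∀ s a, IsCapacity (m s a))
    (F : (S → ℝ) → (S → ℝ))
    (hF : ∀ V s, F V s =
      ∑ a, pol s a *
        (r s a + γ * choquet (m s a) (fun k => ∑ s', p s a k s' * V s')))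
    (V₁ V₂ : S → ℝ) :
    (Finset.univ.sup' Finset.univ_nonempty fun s => |F V₁ s - F V₂ s|) ≤
      γ * Finset.univ.sup' Finset.univ_nonempty fun s => |V₁ s - V₂ s| := by
  set D := univ.sup' univ_nonempty fun s => |V₁ s - V₂ s|
  have hD : ∀ s, |V₁ s - V₂ s| ≤ D := fun s => le_sup' (fun s => |V₁ s - V₂ s|) (mem_univ s)
  refine sup'_le _ _ fun s _ => ?_
  set C := fun a (V : S → ℝ) => choquet (m s a) fun k => ∑ s', p s a k s' * V s'
  have hdiff : F V₁ s - F V₂ s = ∑ a, pol s a * (γ * (C a V₁ - C a V₂)) := by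
    rw [hF, hF, ← sum_sub_distrib]
    exact sum_congr rfl fun a _ => by ring
  rw [hdiff]
  refine (hpol s).abs_sum_mul_le fun a => ?_
  rw [abs_mul, abs_of_nonneg hγ0]
  refine mul_le_mul_of_nonneg_left (abs_choquet_sub_le (hm s a) fun k => ?_) hγ0
  rw [← sum_sub_distrib]
  simp_rw [← mul_sub]
  exact (hp s a k).abs_sum_mul_le hD

/-- γ-contraction of the fuzzy Bellman operator. -/
theorem fuzzy_bellman_contraction
    {S A : Type*} [Fintype S] [Nonempty S] [Fintype A] [Nonempty A]
    (γ : ℝ) (hγ0 : 0 ≤ γ) (hγ1 : γ < 1)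
    (r : S → A → ℝ)
    (pol : S → A → ℝ) (hpol : ∀ s, IsProbVector (pol s))
    (P : S → A → Type*) [∀ s a, Fintype (P s a)] [∀ s a, DecidableEq (P s a)]
    [∀ s a, Nonempty (P s a)]
    (p : ∀ s a, P s a → S → ℝ) (hp : ∀ s a k, IsProbVector (p s a k))
    (m : ∀ s a, Finset (P s a) → ℝ) (hm : ∀ s a, IsCapacity (m s a))
    (F : (S → ℝ) → (S → ℝ))
    (hF : ∀ V s, F V s =
      ∑ a, pol s a *
        (r s a + γ * choquet (m s a) (fun k => ∑ s', p s a k s' * V s')))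
    (V₁ V₂ : S → ℝ) :
    (Finset.univ.sup' Finset.univ_nonempty fun s => |F V₁ s - F V₂ s|) ≤
      γ * Finset.univ.sup' Finset.univ_nonempty fun s => |V₁ s - V₂ s| :=
  fuzzy_bellman_contraction_general γ hγ0 r pol hpol P p hp m hm F hF V₁ V₂
end
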